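/- Let α = 2 and let (V, P) be a C¹ homogeneous solution of degree −2 of the stationary Euler equations on ℝ³ ∖ {0} that is axisymmetric. Then the solution is radial: there is a constant κ ∈ ℝ such that V(x) = κ x/|x|³ and P(x) = −κ²/(2|x|⁴) for all x ≠ 0. -/

import Mathlib

noncomputable section

open Real MeasureTheory Metric

/-- Three-dimensional Euclidean space. -/
abbrev E3 : Type := EuclideanSpace ℝ (Fin 3)

/-- The `i`-th standard basis vector of `ℝ³`. -/
def e3 (i : Fin 3) : E3 := EuclideanSpace.single i 1

/-- Make a vector in `ℝ³` out of three coordinates. -/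
def vec3 (a b c : ℝ) : E3 := (WithLp.equiv 2 (Fin 3 → ℝ)).symm ![a, b, c]

/-- Divergence of a vector field on `ℝ³`. -/
def div3 (V : E3 → E3) (x : E3) : ℝ := ∑ i, fderiv ℝ V x (e3 i) i

/-- Curl (vorticity) of a vector field on `ℝ³`. -/
def curl3 (V : E3 → E3) (x : E3) : E3 :=
  vec3 (fderiv ℝ V x (e3 1) 2 - fderiv ℝ V x (e3 2) 1)
       (fderiv ℝ V x (e3 2) 0 - fderiv ℝ V x (e3 0) 2)
       (fderiv ℝ V x (e3 0) 1 - fderiv ℝ V x (e3 1) 0)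

/-- Cross product on `ℝ³`. -/
def cross3 (u v : E3) : E3 :=
  vec3 (u 1 * v 2 - u 2 * v 1) (u 2 * v 0 - u 0 * v 2) (u 0 * v 1 - u 1 * v 0)

/-- `(V, P)` is a `C¹` homogeneous solution of degree `-α` of the stationary
Euler equations on `ℝ³ \ {0}`: `V`, `P` are `C¹` away from the origin,
positively homogeneous of degrees `-α` and `-2α` respectively, and
`(V·∇)V + ∇P = 0`, `div V = 0` hold pointwise away from the origin. -/
structure IsHomogEuler (α : ℝ) (V : E3 → E3) (P : E3 → ℝ) : Prop where
  contV : ContDiffOn ℝ 1 V {(0 : E3)}ᶜ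
  contP : ContDiffOn ℝ 1 P {(0 : E3)}ᶜ
  homV : ∀ l : ℝ, 0 < l → ∀ x : E3, x ≠ 0 → V (l • x) = l ^ (-α) • V x
  homP : ∀ l : ℝ, 0 < l → ∀ x : E3, x ≠ 0 → P (l • x) = l ^ (-(2 * α)) * P x
  euler : ∀ x : E3, x ≠ 0 → fderiv ℝ V x (V x) + gradient P x = 0
  divFree : ∀ x : E3, x ≠ 0 → div3 V x = 0

/-- Rotation of `ℝ³` about the `x₃`-axis by angle `θ`. -/
def rotZ (θ : ℝ) (v : E3) : E3 :=
  vec3 (Real.cos θ * v 0 - Real.sin θ * v 1)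
       (Real.sin θ * v 0 + Real.cos θ * v 1) (v 2)

/-- The solution `(V, P)` is axisymmetric: it is invariant under all
rotations about the `x₃`-axis. -/
def IsAxisymmetric (V : E3 → E3) (P : E3 → ℝ) : Prop :=
  ∀ θ : ℝ, ∀ x : E3, x ≠ 0 → V (rotZ θ x) = rotZ θ (V x) ∧ P (rotZ θ x) = P x

/-!
Work on the meridian `θ ↦ (sin θ, 0, cos θ)`, `θ ∈ [0, π]`, which meets every ray from the
origin up to a rotation about the `x₃`-axis. Homogeneity turns the derivative of `V` and `P` in
the radial direction into `-2 V` and `-4 P`, and axisymmetry turns their derivative in the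
azimuthal direction into the infinitesimal rotation `v ↦ e₃ × v`. Write
`V = a e_r + b e_θ + c e_φ` and `q = P` on the meridian. Then `div V = 0` says that
`(sin θ · b)' = 0`, so `b = 0` because `sin 0 = 0`, and the Euler equations become
`a c = 0`, `2 a² + c² + 4 q = 0`, `sin θ · q' = c² cos θ`.
Where `c ≠ 0` we get `a = 0`, so `c² = -4 q` and `(c² sin⁴ θ)' = 0`; hence `c = 0` everywhere,
then `q` is constant, `a²` is constant and, by continuity, `a` is a constant `κ`.
-/

open Set Filter Topology
open scoped RealInnerProductSpace

@[simp] lemma vec3_apply_zero (a b c : ℝ) : vec3 a b c 0 = a := rfl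
@[simp] lemma vec3_apply_one (a b c : ℝ) : vec3 a b c 1 = b := rfl
@[simp] lemma vec3_apply_two (a b c : ℝ) : vec3 a b c 2 = c := rfl

@[simp] lemma e3_apply (i j : Fin 3) : e3 i j = if i = j then 1 else 0 := by
  simp [e3, eq_comm]

lemma E3.ext {x y : E3} (h0 : x 0 = y 0) (h1 : x 1 = y 1) (h2 : x 2 = y 2) : x = y := by
  ext i; fin_cases i <;> assumption

lemma E3.inner_eq (x y : E3) : ⟪x, y⟫ = x 0 * y 0 + x 1 * y 1 + x 2 * y 2 := by
  simp [PiLp.inner_apply, Fin.sum_univ_three, mul_comm]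

lemma E3.norm_sq_eq (x : E3) : ‖x‖ ^ 2 = x 0 ^ 2 + x 1 ^ 2 + x 2 ^ 2 := by
  rw [← real_inner_self_eq_norm_sq, E3.inner_eq]; ring

lemma vec3_eq_sum (a b c : ℝ) : vec3 a b c = a • e3 0 + b • e3 1 + c • e3 2 := by
  apply E3.ext <;> simp

lemma HasDerivAt.vec3 {f g h : ℝ → ℝ} {f' g' h' t : ℝ} (hf : HasDerivAt f f' t)
    (hg : HasDerivAt g g' t) (hh : HasDerivAt h h' t) :
    HasDerivAt (fun s => vec3 (f s) (g s) (h s)) (vec3 f' g' h') t := by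
  simp only [vec3_eq_sum]
  exact ((hf.smul_const _).add (hg.smul_const _)).add (hh.smul_const _)

section Calculus

variable {E F : Type*} [NormedAddCommGroup E] [NormedSpace ℝ E]
  [NormedAddCommGroup F] [NormedSpace ℝ F]

lemma fderiv_apply_eq_of_comp_eventuallyEq {f : E → F} {γ : ℝ → E} {g : ℝ → F} {t : ℝ}
    {v : E} {w : F} (hf : DifferentiableAt ℝ f (γ t)) (hγ : HasDerivAt γ v t)
    (hg : HasDerivAt g w t) (hfg : f ∘ γ =ᶠ[𝓝 t] g) : fderiv ℝ f (γ t) v = w :=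
  (hf.hasFDerivAt.comp_hasDerivAt t hγ).unique (hg.congr_of_eventuallyEq hfg)

lemma fderiv_apply_self_of_homogeneous {f : E → F} {x : E} {a : ℝ}
    (hf : DifferentiableAt ℝ f x) (hhom : ∀ l : ℝ, 0 < l → f (l • x) = l ^ a • f x) :
    fderiv ℝ f x x = a • f x := by
  have hγ : HasDerivAt (fun l : ℝ => l • x) x 1 := by
    simpa using (hasDerivAt_id (1 : ℝ)).smul_const x
  have hg : HasDerivAt (fun l : ℝ => l ^ a • f x) (a • f x) 1 := by
    simpa using (Real.hasDerivAt_rpow_const (p := a) (Or.inl one_ne_zero)).smul_const (f x)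
  have hfg : f ∘ (fun l : ℝ => l • x) =ᶠ[𝓝 1] fun l => l ^ a • f x := by
    filter_upwards [lt_mem_nhds one_pos] with l hl using hhom l hl
  simpa using fderiv_apply_eq_of_comp_eventuallyEq (by simpa using hf) hγ hg hfg

lemma eq_of_hasDerivAt_eq_zero {f : ℝ → ℝ} {a b : ℝ} (hab : a ≤ b)
    (hf : ContinuousOn f (Icc a b)) (hf' : ∀ x ∈ Ioo a b, HasDerivAt f 0 x) : f b = f a := by
  rcases hab.eq_or_lt with rfl | hab
  · rfl
  obtain ⟨c, -, hc⟩ := exists_hasDerivAt_eq_slope f (fun _ => 0) hab hf hf'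
  rw [eq_comm, div_eq_zero_iff, sub_eq_zero] at hc
  exact hc.resolve_right (sub_ne_zero.2 hab.ne')

lemma IsPreconnected.exists_const_of_sq_eq_const {X 𝕜 : Type*} [TopologicalSpace X] [Field 𝕜]
    [TopologicalSpace 𝕜] [T1Space 𝕜] [ContinuousInv₀ 𝕜] [ContinuousMul 𝕜] {s : Set X}
    {f : X → 𝕜} {k : 𝕜}
    (hs : IsPreconnected s) (hf : ContinuousOn f s) (hsq : ∀ x ∈ s, f x ^ 2 = k) :
    ∃ κ, ∀ x ∈ s, f x = κ := by
  rcases s.eq_empty_or_nonempty with rfl | ⟨y, hy⟩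
  · simp
  refine ⟨f y, ?_⟩
  by_cases hy0 : f y = 0
  · intro x hx
    have := hsq x hx
    rw [← hsq y hy, hy0] at this
    simpa [hy0] using this
  · exact hs.eq_of_sq_eq hf continuousOn_const (fun x hx => by simp [hsq x hx, hsq y hy])
      (fun _ => hy0) hy rfl

end Calculus

@[simp] lemma rotZ_zero (v : E3) : rotZ 0 v = v := by
  apply E3.ext <;> simp [rotZ]

lemma rotZ_smul (θ c : ℝ) (v : E3) : rotZ θ (c • v) = c • rotZ θ v := by
  apply E3.ext <;> simp [rotZ] <;> ring

lemma hasDerivAt_rotZ_zero (v : E3) :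
    HasDerivAt (fun θ => rotZ θ v) (cross3 (e3 2) v) 0 := by
  have := (((Real.hasDerivAt_cos 0).mul_const (v 0)).sub
    ((Real.hasDerivAt_sin 0).mul_const (v 1))).vec3
    (((Real.hasDerivAt_sin 0).mul_const (v 0)).add ((Real.hasDerivAt_cos 0).mul_const (v 1)))
    (hasDerivAt_const 0 (v 2))
  convert this using 1
  · rfl
  · apply E3.ext <;> simp [cross3]

lemma fderiv_apply_cross3_of_rotZ_equivariant {f : E3 → E3} {x : E3}
    (hf : DifferentiableAt ℝ f x) (hrot : ∀ θ, f (rotZ θ x) = rotZ θ (f x)) :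
    fderiv ℝ f x (cross3 (e3 2) x) = cross3 (e3 2) (f x) := by
  simpa using fderiv_apply_eq_of_comp_eventuallyEq (by simpa using hf) (hasDerivAt_rotZ_zero x)
    (hasDerivAt_rotZ_zero (f x)) (Eventually.of_forall hrot)

lemma fderiv_apply_cross3_of_rotZ_invariant {f : E3 → ℝ} {x : E3}
    (hf : DifferentiableAt ℝ f x) (hrot : ∀ θ, f (rotZ θ x) = f x) :
    fderiv ℝ f x (cross3 (e3 2) x) = 0 := by
  simpa using fderiv_apply_eq_of_comp_eventuallyEq (by simpa using hf) (hasDerivAt_rotZ_zero x)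
    (hasDerivAt_const 0 (f x)) (Eventually.of_forall hrot)

def meridian (θ : ℝ) : E3 := vec3 (sin θ) 0 (cos θ)

def meridianTangent (θ : ℝ) : E3 := vec3 (cos θ) 0 (-sin θ)

@[simp] lemma meridian_apply_zero (θ : ℝ) : meridian θ 0 = sin θ := rfl
@[simp] lemma meridian_apply_one (θ : ℝ) : meridian θ 1 = 0 := rfl
@[simp] lemma meridian_apply_two (θ : ℝ) : meridian θ 2 = cos θ := rfl
@[simp] lemma meridianTangent_apply_zero (θ : ℝ) : meridianTangent θ 0 = cos θ := rfl
@[simp] lemma meridianTangent_apply_one (θ : ℝ) : meridianTangent θ 1 = 0 := rfl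
@[simp] lemma meridianTangent_apply_two (θ : ℝ) : meridianTangent θ 2 = -sin θ := rfl

lemma hasDerivAt_meridian (θ : ℝ) : HasDerivAt meridian (meridianTangent θ) θ :=
  (Real.hasDerivAt_sin θ).vec3 (hasDerivAt_const θ 0) (Real.hasDerivAt_cos θ)

lemma continuous_meridian : Continuous meridian :=
  continuous_iff_continuousAt.2 fun θ => (hasDerivAt_meridian θ).continuousAt

lemma norm_meridian (θ : ℝ) : ‖meridian θ‖ = 1 := by
  have := E3.norm_sq_eq (meridian θ)
  simp only [meridian_apply_zero, meridian_apply_one, meridian_apply_two, sin_sq_add_cos_sq,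
    zero_pow two_ne_zero, add_zero] at this
  exact (pow_eq_one_iff_of_nonneg (norm_nonneg _) two_ne_zero).1 this

lemma meridian_ne_zero (θ : ℝ) : meridian θ ≠ 0 :=
  norm_ne_zero_iff.1 (by simp [norm_meridian])

lemma cross3_e3_two_meridian (θ : ℝ) : cross3 (e3 2) (meridian θ) = sin θ • e3 1 := by
  apply E3.ext <;> simp [cross3]

lemma e3_zero_eq_meridian (θ : ℝ) : e3 0 = sin θ • meridian θ + cos θ • meridianTangent θ := by
  apply E3.ext <;> simp <;> nlinarith [sin_sq_add_cos_sq θ]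

lemma e3_two_eq_meridian (θ : ℝ) : e3 2 = cos θ • meridian θ - sin θ • meridianTangent θ := by
  apply E3.ext <;> simp <;> nlinarith [sin_sq_add_cos_sq θ]

lemma eq_meridian_frame (w : E3) (θ : ℝ) :
    w = ⟪w, meridian θ⟫ • meridian θ + ⟪w, meridianTangent θ⟫ • meridianTangent θ
      + w 1 • e3 1 := by
  have h := sin_sq_add_cos_sq θ
  apply E3.ext
  · simp [E3.inner_eq]; linear_combination -w 0 * h
  · simp
  · simp [E3.inner_eq]; linear_combination -w 2 * h

-- spherical coordinates: `φ = arg (x₀ + i x₁)` and `θ = arg (x₂ + i √(x₀² + x₁²)) ∈ [0, π]`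
lemma exists_eq_norm_smul_rotZ_meridian (x : E3) :
    ∃ φ θ : ℝ, θ ∈ Icc 0 π ∧ x = ‖x‖ • rotZ φ (meridian θ) := by
  set z : ℂ := ⟨x 0, x 1⟩
  set w : ℂ := ⟨x 2, ‖z‖⟩
  have hw : ‖w‖ = ‖x‖ := by
    rw [← sq_eq_sq₀ (norm_nonneg _) (norm_nonneg _), Complex.sq_norm, Complex.normSq_apply,
      E3.norm_sq_eq, ← sq, ← sq, Complex.sq_norm, Complex.normSq_apply]
    ring
  refine ⟨z.arg, w.arg, ⟨Complex.arg_nonneg_iff.2 (norm_nonneg z), Complex.arg_le_pi w⟩, ?_⟩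
  have hz0 : ‖z‖ * cos z.arg = x 0 := Complex.norm_mul_cos_arg z
  have hz1 : ‖z‖ * sin z.arg = x 1 := Complex.norm_mul_sin_arg z
  have hw1 : ‖w‖ * sin w.arg = ‖z‖ := Complex.norm_mul_sin_arg w
  rw [← hw]
  apply E3.ext <;> simp [rotZ]
  · linear_combination -hz0 - cos z.arg * hw1
  · linear_combination -hz1 - sin z.arg * hw1
  · rfl

lemma hasDerivAt_meridianTangent (θ : ℝ) :
    HasDerivAt meridianTangent (-meridian θ) θ := by
  convert (Real.hasDerivAt_cos θ).vec3 (hasDerivAt_const θ 0) (Real.hasDerivAt_sin θ).neg using 1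
  · rfl
  · apply E3.ext <;> simp

lemma continuous_meridianTangent : Continuous meridianTangent :=
  continuous_iff_continuousAt.2 fun θ => (hasDerivAt_meridianTangent θ).continuousAt

lemma e3_one_eq_meridian {θ : ℝ} (hs : sin θ ≠ 0) :
    e3 1 = (sin θ)⁻¹ • cross3 (e3 2) (meridian θ) := by
  rw [cross3_e3_two_meridian, inv_smul_smul₀ hs]

def radialPart (V : E3 → E3) (θ : ℝ) : ℝ := ⟪V (meridian θ), meridian θ⟫

def polarPart (V : E3 → E3) (θ : ℝ) : ℝ := ⟪V (meridian θ), meridianTangent θ⟫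

def azimuthalPart (V : E3 → E3) (θ : ℝ) : ℝ := V (meridian θ) 1

namespace IsHomogEuler

variable {α : ℝ} {V : E3 → E3} {P : E3 → ℝ}

lemma differentiableAt_V (h : IsHomogEuler α V P) {x : E3} (hx : x ≠ 0) :
    DifferentiableAt ℝ V x :=
  (h.contV.differentiableOn one_ne_zero).differentiableAt (isOpen_compl_singleton.mem_nhds hx)

lemma differentiableAt_P (h : IsHomogEuler α V P) {x : E3} (hx : x ≠ 0) :
    DifferentiableAt ℝ P x :=
  (h.contP.differentiableOn one_ne_zero).differentiableAt (isOpen_compl_singleton.mem_nhds hx)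

lemma fderiv_V_apply_self (h : IsHomogEuler α V P) {x : E3} (hx : x ≠ 0) :
    fderiv ℝ V x x = (-α) • V x :=
  fderiv_apply_self_of_homogeneous (h.differentiableAt_V hx) fun l hl => h.homV l hl x hx

lemma fderiv_P_apply_self (h : IsHomogEuler α V P) {x : E3} (hx : x ≠ 0) :
    fderiv ℝ P x x = -(2 * α) * P x :=
  fderiv_apply_self_of_homogeneous (h.differentiableAt_P hx) fun l hl => h.homP l hl x hx

lemma inner_euler (h : IsHomogEuler α V P) {x : E3} (hx : x ≠ 0) (v : E3) :
    ⟪fderiv ℝ V x (V x), v⟫ + fderiv ℝ P x v = 0 := by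
  rw [← inner_gradient_left, ← inner_add_left, h.euler x hx, inner_zero_left]

lemma hasDerivAt_V_comp_meridian (h : IsHomogEuler α V P) (θ : ℝ) :
    HasDerivAt (V ∘ meridian) (fderiv ℝ V (meridian θ) (meridianTangent θ)) θ :=
  (h.differentiableAt_V (meridian_ne_zero θ)).hasFDerivAt.comp_hasDerivAt θ
    (hasDerivAt_meridian θ)

lemma hasDerivAt_P_comp_meridian (h : IsHomogEuler α V P) (θ : ℝ) :
    HasDerivAt (P ∘ meridian) (fderiv ℝ P (meridian θ) (meridianTangent θ)) θ :=
  (h.differentiableAt_P (meridian_ne_zero θ)).hasFDerivAt.comp_hasDerivAt θ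
    (hasDerivAt_meridian θ)

lemma continuous_V_comp_meridian (h : IsHomogEuler α V P) : Continuous (V ∘ meridian) :=
  continuous_iff_continuousAt.2 fun θ => (h.hasDerivAt_V_comp_meridian θ).continuousAt

lemma continuous_P_comp_meridian (h : IsHomogEuler α V P) : Continuous (P ∘ meridian) :=
  continuous_iff_continuousAt.2 fun θ => (h.hasDerivAt_P_comp_meridian θ).continuousAt

lemma fderiv_V_apply_e3_one (h : IsHomogEuler α V P) (haxi : IsAxisymmetric V P) {θ : ℝ}
    (hs : sin θ ≠ 0) :
    fderiv ℝ V (meridian θ) (e3 1) = (sin θ)⁻¹ • cross3 (e3 2) (V (meridian θ)) := by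
  have hx := meridian_ne_zero θ
  rw [e3_one_eq_meridian hs, map_smul, fderiv_apply_cross3_of_rotZ_equivariant
    (h.differentiableAt_V hx) fun φ => (haxi φ _ hx).1]

lemma fderiv_P_apply_e3_one (h : IsHomogEuler α V P) (haxi : IsAxisymmetric V P) {θ : ℝ}
    (hs : sin θ ≠ 0) : fderiv ℝ P (meridian θ) (e3 1) = 0 := by
  have hx := meridian_ne_zero θ
  rw [e3_one_eq_meridian hs, map_smul, fderiv_apply_cross3_of_rotZ_invariant
    (h.differentiableAt_P hx) fun φ => (haxi φ _ hx).2, smul_zero]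

lemma continuous_radialPart (h : IsHomogEuler α V P) : Continuous (radialPart V) :=
  h.continuous_V_comp_meridian.inner continuous_meridian

lemma continuous_polarPart (h : IsHomogEuler α V P) : Continuous (polarPart V) :=
  h.continuous_V_comp_meridian.inner continuous_meridianTangent

lemma hasDerivAt_azimuthalPart (h : IsHomogEuler α V P) (θ : ℝ) :
    HasDerivAt (azimuthalPart V) (fderiv ℝ V (meridian θ) (meridianTangent θ) 1) θ :=
  (EuclideanSpace.proj (𝕜 := ℝ) (1 : Fin 3)).hasFDerivAt.comp_hasDerivAt θ
    (h.hasDerivAt_V_comp_meridian θ)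

lemma continuous_azimuthalPart (h : IsHomogEuler α V P) : Continuous (azimuthalPart V) :=
  continuous_iff_continuousAt.2 fun θ => (h.hasDerivAt_azimuthalPart θ).continuousAt

lemma divFree_meridian (h : IsHomogEuler α V P) (haxi : IsAxisymmetric V P) {θ : ℝ}
    (hs : sin θ ≠ 0) :
    (sin θ)⁻¹ * V (meridian θ) 0 - α * radialPart V θ
      + cos θ * fderiv ℝ V (meridian θ) (meridianTangent θ) 0
      - sin θ * fderiv ℝ V (meridian θ) (meridianTangent θ) 2 = 0 := by
  have hx := meridian_ne_zero θ
  set D := fderiv ℝ V (meridian θ)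
  have hdiv := h.divFree _ hx
  rw [div3, Fin.sum_univ_three, e3_zero_eq_meridian θ, e3_two_eq_meridian θ, D.map_add,
    D.map_sub, D.map_smul, D.map_smul, D.map_smul, D.map_smul, h.fderiv_V_apply_self hx,
    h.fderiv_V_apply_e3_one haxi hs] at hdiv
  simp [radialPart, E3.inner_eq, cross3] at hdiv ⊢
  linear_combination hdiv

lemma hasDerivAt_sin_mul_polarPart (h : IsHomogEuler α V P) (haxi : IsAxisymmetric V P)
    {θ : ℝ} (hs : sin θ ≠ 0) :
    HasDerivAt (fun t => sin t * polarPart V t) ((α - 2) * sin θ * radialPart V θ) θ := by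
  have hpolar : HasDerivAt (polarPart V) (⟪V (meridian θ), -meridian θ⟫
      + ⟪fderiv ℝ V (meridian θ) (meridianTangent θ), meridianTangent θ⟫) θ :=
    (h.hasDerivAt_V_comp_meridian θ).inner ℝ (hasDerivAt_meridianTangent θ)
  refine ((Real.hasDerivAt_sin θ).mul hpolar).congr_deriv ?_
  have hdiv := h.divFree_meridian haxi hs
  simp [polarPart, radialPart, E3.inner_eq] at hdiv ⊢
  linear_combination sin θ * hdiv + V (meridian θ) 0 * (sin_sq_add_cos_sq θ)
    - V (meridian θ) 0 * mul_inv_cancel₀ hs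

lemma polarPart_eq_zero (h : IsHomogEuler 2 V P) (haxi : IsAxisymmetric V P) {θ : ℝ}
    (hθ : θ ∈ Ioo 0 π) : polarPart V θ = 0 := by
  have hflux : sin θ * polarPart V θ = sin 0 * polarPart V 0 :=
    eq_of_hasDerivAt_eq_zero (f := fun t => sin t * polarPart V t) hθ.1.le
      (continuous_sin.mul h.continuous_polarPart).continuousOn fun t ht => by
        simpa using h.hasDerivAt_sin_mul_polarPart haxi
          (sin_pos_of_pos_of_lt_pi ht.1 (ht.2.trans hθ.2)).ne'
  simpa [(sin_pos_of_pos_of_lt_pi hθ.1 hθ.2).ne'] using hflux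

lemma V_meridian_eq_radial_add_azimuthal (h : IsHomogEuler 2 V P) (haxi : IsAxisymmetric V P)
    {θ : ℝ} (hθ : θ ∈ Ioo 0 π) :
    V (meridian θ) = radialPart V θ • meridian θ + azimuthalPart V θ • e3 1 := by
  conv_lhs => rw [eq_meridian_frame (V (meridian θ)) θ]
  rw [← polarPart, h.polarPart_eq_zero haxi hθ, zero_smul, add_zero]
  rfl

lemma euler_meridian (h : IsHomogEuler 2 V P) (haxi : IsAxisymmetric V P) {θ : ℝ}
    (hθ : θ ∈ Ioo 0 π) :
    radialPart V θ * azimuthalPart V θ = 0 ∧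
    2 * radialPart V θ ^ 2 + azimuthalPart V θ ^ 2 + 4 * P (meridian θ) = 0 ∧
    sin θ * fderiv ℝ P (meridian θ) (meridianTangent θ) = azimuthalPart V θ ^ 2 * cos θ := by
  have hx := meridian_ne_zero θ
  have hs : sin θ ≠ 0 := (sin_pos_of_pos_of_lt_pi hθ.1 hθ.2).ne'
  have hVx := h.V_meridian_eq_radial_add_azimuthal haxi hθ
  set a := radialPart V θ
  set c := azimuthalPart V θ
  have hDV : fderiv ℝ V (meridian θ) (V (meridian θ)) =
      (-2 * a) • V (meridian θ) + (c * (sin θ)⁻¹) • cross3 (e3 2) (V (meridian θ)) := by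
    conv_lhs => rw [hVx]
    rw [map_add, map_smul, map_smul, h.fderiv_V_apply_self hx, h.fderiv_V_apply_e3_one haxi hs,
      smul_smul, smul_smul]
    simp only [mul_comm]
  have he1 := h.inner_euler hx (e3 1)
  have hγ := h.inner_euler hx (meridian θ)
  have hτ := h.inner_euler hx (meridianTangent θ)
  rw [h.fderiv_P_apply_e3_one haxi hs, hDV] at he1
  rw [h.fderiv_P_apply_self hx, hDV] at hγ
  rw [hDV] at hτ
  rw [hVx] at he1 hγ hτ
  simp [E3.inner_eq, cross3] at he1 hγ hτ
  field_simp at he1 hγ hτ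
  refine ⟨?_, ?_, ?_⟩
  · linear_combination -he1
  · linear_combination -hγ - 2 * a ^ 2 * sin_sq_add_cos_sq θ
  · linear_combination hτ

lemma hasDerivAt_azimuthalPart_sq (h : IsHomogEuler 2 V P) (haxi : IsAxisymmetric V P)
    {θ : ℝ} (hθ : θ ∈ Ioo 0 π) :
    HasDerivAt (fun t => azimuthalPart V t ^ 2)
      (-4 * azimuthalPart V θ ^ 2 * cos θ / sin θ) θ := by
  by_cases hc : azimuthalPart V θ = 0
  · exact ((h.hasDerivAt_azimuthalPart θ).pow 2).congr_deriv (by simp [hc])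
  -- where `c ≠ 0`, the azimuthal Euler equation forces `a = 0`, hence `c² = -4 P` nearby
  have hnear : (fun t => azimuthalPart V t ^ 2) =ᶠ[𝓝 θ] fun t => -4 * (P ∘ meridian) t := by
    filter_upwards [(h.continuous_azimuthalPart.isOpen_preimage _ isOpen_ne).inter isOpen_Ioo
      |>.mem_nhds ⟨hc, hθ⟩] with t ⟨hct, ht⟩
    obtain ⟨hac, hsum, -⟩ := h.euler_meridian haxi ht
    have hat : radialPart V t = 0 := (mul_eq_zero.1 hac).resolve_right hct
    simp only [Function.comp_apply]
    linear_combination hsum - 2 * radialPart V t * hat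
  have hs : sin θ ≠ 0 := (sin_pos_of_pos_of_lt_pi hθ.1 hθ.2).ne'
  refine (((h.hasDerivAt_P_comp_meridian θ).const_mul (-4)).congr_of_eventuallyEq hnear)
    |>.congr_deriv ?_
  rw [eq_div_iff hs]
  linear_combination -4 * (h.euler_meridian haxi hθ).2.2

lemma azimuthalPart_eq_zero (h : IsHomogEuler 2 V P) (haxi : IsAxisymmetric V P) {θ : ℝ}
    (hθ : θ ∈ Ioo 0 π) : azimuthalPart V θ = 0 := by
  have hconst : azimuthalPart V θ ^ 2 * sin θ ^ 4 = azimuthalPart V 0 ^ 2 * sin 0 ^ 4 :=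
    eq_of_hasDerivAt_eq_zero (f := fun t => azimuthalPart V t ^ 2 * sin t ^ 4) hθ.1.le
      ((h.continuous_azimuthalPart.pow 2).mul (continuous_sin.pow 4)).continuousOn
      fun t ht => by
        have hs : sin t ≠ 0 := (sin_pos_of_pos_of_lt_pi ht.1 (ht.2.trans hθ.2)).ne'
        refine ((h.hasDerivAt_azimuthalPart_sq haxi ⟨ht.1, ht.2.trans hθ.2⟩).mul
          ((Real.hasDerivAt_sin t).pow 4)).congr_deriv ?_
        simp only [Pi.pow_apply]
        field_simp
        ring
  simpa [(sin_pos_of_pos_of_lt_pi hθ.1 hθ.2).ne'] using hconst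

lemma P_meridian_eq_P_meridian_zero (h : IsHomogEuler 2 V P) (haxi : IsAxisymmetric V P) {θ : ℝ}
    (hθ : θ ∈ Icc 0 π) : P (meridian θ) = P (meridian 0) :=
  eq_of_hasDerivAt_eq_zero (f := P ∘ meridian) hθ.1 h.continuous_P_comp_meridian.continuousOn
    fun t ht => by
      have ht' : t ∈ Ioo 0 π := ⟨ht.1, ht.2.trans_le hθ.2⟩
      have hq := (h.euler_meridian haxi ht').2.2
      rw [h.azimuthalPart_eq_zero haxi ht', zero_pow two_ne_zero, zero_mul, mul_eq_zero,
        or_iff_right (sin_pos_of_pos_of_lt_pi ht'.1 ht'.2).ne'] at hq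
      simpa [hq] using h.hasDerivAt_P_comp_meridian t

lemma exists_radial_on_meridian (h : IsHomogEuler 2 V P) (haxi : IsAxisymmetric V P) :
    ∃ κ : ℝ, ∀ θ ∈ Icc 0 π, V (meridian θ) = κ • meridian θ ∧ P (meridian θ) = -κ ^ 2 / 2 := by
  have hclosure : Icc 0 π ⊆ closure (Ioo 0 π) := (closure_Ioo pi_pos.ne).symm.subset
  have hsq : EqOn (fun θ => radialPart V θ ^ 2) (fun _ => -2 * P (meridian 0)) (Icc 0 π) := by
    refine EqOn.of_subset_closure (fun θ hθ => ?_) (h.continuous_radialPart.pow 2).continuousOn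
      continuousOn_const Ioo_subset_Icc_self hclosure
    have hsum := (h.euler_meridian haxi hθ).2.1
    rw [h.azimuthalPart_eq_zero haxi hθ,
      h.P_meridian_eq_P_meridian_zero haxi (Ioo_subset_Icc_self hθ)] at hsum
    linear_combination hsum / 2
  obtain ⟨κ, hκ⟩ :=
    isPreconnected_Icc.exists_const_of_sq_eq_const h.continuous_radialPart.continuousOn hsq
  have hV : EqOn (V ∘ meridian) (fun θ => radialPart V θ • meridian θ) (Icc 0 π) := by
    refine EqOn.of_subset_closure (fun θ hθ => ?_) h.continuous_V_comp_meridian.continuousOn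
      (h.continuous_radialPart.smul continuous_meridian).continuousOn Ioo_subset_Icc_self hclosure
    simpa [h.azimuthalPart_eq_zero haxi hθ] using h.V_meridian_eq_radial_add_azimuthal haxi hθ
  refine ⟨κ, fun θ hθ => ⟨?_, ?_⟩⟩
  · rw [← hκ θ hθ]
    exact hV hθ
  · rw [h.P_meridian_eq_P_meridian_zero haxi hθ, ← hκ θ hθ]
    linear_combination (hsq hθ) / 2

end IsHomogEuler

/-- for `α = 2`, every axisymmetric `C¹` homogeneous solution
is the radial one. -/
theorem stmt11 (V : E3 → E3) (P : E3 → ℝ) (h : IsHomogEuler 2 V P)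
    (haxi : IsAxisymmetric V P) :
    ∃ κ : ℝ, ∀ x : E3, x ≠ 0 →
      V x = (κ / ‖x‖ ^ 3) • x ∧ P x = -κ ^ 2 / (2 * ‖x‖ ^ 4) := by
  obtain ⟨κ, hκ⟩ := h.exists_radial_on_meridian haxi
  refine ⟨κ, fun x hx => ?_⟩
  obtain ⟨φ, θ, hθ, hxy⟩ := exists_eq_norm_smul_rotZ_meridian x
  set r := ‖x‖
  set y := rotZ φ (meridian θ)
  have hr : 0 < r := norm_pos_iff.2 hx
  have hy : y ≠ 0 := by
    rintro hy
    rw [hy, smul_zero] at hxy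
    exact hx hxy
  have hVy : V y = κ • y := by
    rw [(haxi φ _ (meridian_ne_zero θ)).1, (hκ θ hθ).1, rotZ_smul]
  have hPy : P y = -κ ^ 2 / 2 := by
    rw [(haxi φ _ (meridian_ne_zero θ)).2, (hκ θ hθ).2]
  rw [hxy, h.homV r hr y hy, h.homP r hr y hy, hVy, hPy, smul_smul, smul_smul]
  norm_num [Real.rpow_neg hr.le]
  constructor <;> field_simp
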